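/- arXiv:math/0407194 — 4 statements merged into one kernel-verified Lean document; each statement's English description precedes it below -/
import Mathlib

section
/- Let Ω be a finite set of cardinality d = p^k (p prime, k ≥ 1), and let G ⊆ Sym(Ω) be a primitive solvable subgroup. Then every nonidentity element g ∈ G has at most p^{k-1} fixed points on Ω. -/
/-- A subgroup `G` of `Sym(Ω)` is primitive if it acts transitively on `Ω`
and every point stabilizer is a maximal subgroup of `G`. -/
def IsPrimitivePermSubgroup {Ω : Type*} [Fintype Ω] (G : Subgroup (Equiv.Perm Ω)) : Prop :=
  MulAction.IsPretransitive G Ω ∧ ∀ x : Ω, IsCoatom (MulAction.stabilizer G x)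

/-- `A` is a minimal normal subgroup: nontrivial, normal, and containing no smaller
nontrivial normal subgroup. -/
def IsMinimalNormalSubgroup {H : Type*} [Group H] (A : Subgroup H) : Prop :=
  A.Normal ∧ A ≠ ⊥ ∧ ∀ B : Subgroup H, B.Normal → B ≠ ⊥ → B ≤ A → B = A
/-- (Zariski) A nonidentity element of a primitive solvable subgroup of Sym(Ω),
with |Ω| = p^k, has at most p^(k-1) fixed points. -/
theorem zariski_fixed_point_bound {Ω : Type*} [Fintype Ω] [Nonempty Ω]
    (p k : ℕ) (hp : p.Prime) (hk : 1 ≤ k)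
    (G : Subgroup (Equiv.Perm Ω)) (hcard : Fintype.card Ω = p ^ k)
    (hprim : IsPrimitivePermSubgroup G) (hsolv : IsSolvable G)
    (g : G) (hg : g ≠ 1) :
    Nat.card {x : Ω | (g : Equiv.Perm Ω) x = x} ≤ p ^ (k - 1) := by
  obtain ⟨hGtrans, hGmax⟩ := hprim
  classical
  set s : Set Ω := {x : Ω | (g : Equiv.Perm Ω) x = x} with hs
  rcases s.eq_empty_or_nonempty with he | ⟨x₀, hx₀⟩
  · rw [he]; simp
  have hx₀ : (g : Equiv.Perm Ω) x₀ = x₀ := hx₀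
  have hsmul : ∀ (a : G) (y : Ω), a • y = (a : Equiv.Perm Ω) y := fun a y => rfl
  have hgx : g • x₀ = x₀ := hx₀
  -- faithfulness
  have hfaith : ∀ a : G, (∀ y : Ω, a • y = y) → a = 1 := by
    intro a ha
    exact Subtype.ext (Equiv.ext fun y => ha y)
  -- last nontrivial term of derived series
  have hP : ∃ n, derivedSeries ↥G n = ⊥ := (isSolvable_def ↥G).mp hsolv
  have hm : derivedSeries ↥G (Nat.find hP) = ⊥ := Nat.find_spec hP
  have hm0 : Nat.find hP ≠ 0 := by
    intro h
    rw [h] at hm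
    exact hg (Subgroup.mem_bot.mp (hm ▸ Subgroup.mem_top g))
  obtain ⟨n, hn⟩ := Nat.exists_eq_succ_of_ne_zero hm0
  set A : Subgroup ↥G := derivedSeries ↥G n with hA
  have hAn : A ≠ ⊥ := Nat.find_min hP (by omega)
  have hAbot : derivedSeries ↥G (n + 1) = ⊥ := by rw [← Nat.succ_eq_add_one, ← hn]; exact hm
  have hAnormal : A.Normal := derivedSeries_normal G n
  have hAcomm : ∀ a b : ↥G, a ∈ A → b ∈ A → a * b = b * a := by
    intro a b ha hb
    open scoped commutatorElement in
    have h1 : ⁅a, b⁆ ∈ derivedSeries ↥G (n + 1) :=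
      Subgroup.commutator_mem_commutator ha hb
    rw [hAbot] at h1
    exact commutatorElement_eq_one_iff_mul_comm.mp (Subgroup.mem_bot.mp h1)
  -- A is not contained in the stabilizer of x₀
  have hAstab : ¬ A ≤ MulAction.stabilizer G x₀ := by
    intro hle
    apply hAn
    rw [Subgroup.eq_bot_iff_forall]
    intro a ha
    apply hfaith
    intro y
    obtain ⟨t, ht⟩ := hGtrans.exists_smul_eq x₀ y
    have h1 : t⁻¹ * a * t ∈ A := by
      have := hAnormal.conj_mem a ha t⁻¹
      simpa using this
    have h2 : (t⁻¹ * a * t) • x₀ = x₀ := hle h1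
    calc a • y = a • t • x₀ := by rw [ht]
    _ = t • (t⁻¹ * a * t) • x₀ := by simp [mul_smul]
    _ = y := by rw [h2, ht]
  -- A ⊔ stabilizer = ⊤
  have hsup : A ⊔ MulAction.stabilizer G x₀ = ⊤ := by
    apply (hGmax x₀).2
    exact lt_of_le_of_ne le_sup_right (fun h => hAstab (h ▸ le_sup_left))
  -- A is transitive
  have hAtrans : ∀ y : Ω, ∃ a : ↥G, a ∈ A ∧ a • x₀ = y := by
    intro y
    obtain ⟨t, ht⟩ := hGtrans.exists_smul_eq x₀ y
    have h1 : (t : ↥G) ∈ ((A ⊔ MulAction.stabilizer G x₀ : Subgroup ↥G) : Set ↥G) := by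
      rw [hsup]; trivial
    rw [Subgroup.normal_mul] at h1
    obtain ⟨a, ha, h, hh, hmul⟩ := h1
    refine ⟨a, ha, ?_⟩
    have hhx : h • x₀ = x₀ := hh
    have hmul' : a * h = t := hmul
    calc a • x₀ = a • h • x₀ := by rw [hhx]
    _ = t • x₀ := by rw [← mul_smul, hmul']
    _ = y := ht
  -- freeness
  have hfree : ∀ a b : ↥G, a ∈ A → b ∈ A → a • x₀ = b • x₀ → a = b := by
    intro a b ha hb hab
    have hc : b⁻¹ * a ∈ A := A.mul_mem (A.inv_mem hb) ha
    have hcx : (b⁻¹ * a) • x₀ = x₀ := by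
      rw [mul_smul, hab, ← mul_smul, inv_mul_cancel, one_smul]
    have : b⁻¹ * a = 1 := by
      apply hfaith
      intro y
      obtain ⟨c, hcA, hcy⟩ := hAtrans y
      calc (b⁻¹ * a) • y = (b⁻¹ * a) • c • x₀ := by rw [hcy]
      _ = ((b⁻¹ * a) * c) • x₀ := by simp [mul_smul]
      _ = (c * (b⁻¹ * a)) • x₀ := by rw [hAcomm _ _ hc hcA]
      _ = c • (b⁻¹ * a) • x₀ := by rw [mul_smul]
      _ = y := by rw [hcx, hcy]
    calc a = b * (b⁻¹ * a) := by group
    _ = b := by rw [this, mul_one]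
  -- card A = p ^ k
  have hAcard : Nat.card A = p ^ k := by
    have hbij : Function.Bijective (fun a : A => (a : ↥G) • x₀) := by
      constructor
      · intro a b hab
        exact Subtype.ext (hfree a b a.2 b.2 hab)
      · intro y
        obtain ⟨a, ha, hay⟩ := hAtrans y
        exact ⟨⟨a, ha⟩, hay⟩
    rw [Nat.card_eq_of_bijective _ hbij, Nat.card_eq_fintype_card, hcard]
  -- centralizer piece
  set C : Subgroup ↥G := A ⊓ Subgroup.centralizer {g} with hC
  -- injection from s to C
  choose f hf1 hf2 using hAtrans
  have hfC : ∀ y : s, f y ∈ C := by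
    rintro ⟨y, hy⟩
    have hy : (g : Equiv.Perm Ω) y = y := hy
    refine Subgroup.mem_inf.mpr ⟨hf1 y, Subgroup.mem_centralizer_iff.mpr ?_⟩
    intro z hz
    rw [Set.mem_singleton_iff] at hz
    rw [hz]
    have h1 : g * (f y) * g⁻¹ ∈ A := hAnormal.conj_mem (f y) (hf1 y) g
    have h2 : (g * (f y) * g⁻¹) • x₀ = (f y) • x₀ := by
      have hginv : g⁻¹ • x₀ = x₀ := by
        conv_lhs => rw [← hgx]
        rw [← mul_smul, inv_mul_cancel, one_smul]
      rw [mul_smul, mul_smul, hginv, hf2 y]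
      exact hy
    have h3 := hfree _ _ h1 (hf1 y) h2
    calc g * f y = (g * f y * g⁻¹) * g := by group
    _ = f y * g := by rw [h3]
  have hinj : Nat.card s ≤ Nat.card C := by
    apply Nat.card_le_card_of_injective (fun y : s => (⟨f y, hfC y⟩ : C))
    intro y z hyz
    simp only [Subtype.mk.injEq] at hyz
    apply Subtype.ext
    rw [← hf2 y, ← hf2 z, hyz]
  -- C ≠ A
  have hCA : C ≠ A := by
    intro h
    apply hg
    apply hfaith
    intro y
    have hle : A ≤ Subgroup.centralizer {g} := by rw [← h]; exact inf_le_right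
    have hcent : g * (f y) = (f y) * g :=
      Subgroup.mem_centralizer_iff.mp (hle (hf1 y)) g rfl
    calc g • y = g • (f y) • x₀ := by rw [hf2 y]
    _ = (g * f y) • x₀ := by rw [mul_smul]
    _ = (f y * g) • x₀ := by rw [hcent]
    _ = (f y) • x₀ := by rw [mul_smul, hgx]
    _ = y := hf2 y
  -- counting
  have hdvd : Nat.card C ∣ p ^ k := hAcard ▸ Subgroup.card_dvd_of_le inf_le_left
  obtain ⟨j, hj, hcj⟩ := (Nat.dvd_prime_pow hp).mp hdvd
  have hjk : j ≠ k := by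
    intro h
    exact hCA (Subgroup.eq_of_le_of_card_ge inf_le_left (by rw [hAcard, hcj, h]))
  have : Nat.card C ≤ p ^ (k - 1) := by
    rw [hcj]
    exact Nat.pow_le_pow_right hp.pos (by omega)
  exact hinj.trans this
end

section
/- Let G be a primitive solvable subgroup of Sym(Ω) with unique minimal normal subgroup A, let x ∈ Ω, and let B be a minimal normal subgroup of the stabilizer G_x. If the centralizer C_A(B) of B in A is trivial, then x is the only fixed point of the action of B on Ω. -/
/-!
A minimal normal subgroup `A` of a solvable group is abelian. Since `G` acts faithfully, `A`
does not fix `x`, so by maximality of `G_x` we get `A G_x = G` and `A` is transitive; being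
abelian, it then acts regularly. If `B ≤ G_x` fixes `y = a • x` with `a ∈ A`, the commutator
`a⁻¹ b a b⁻¹ ∈ A` fixes `x`, hence is trivial, so `a ∈ C_A(B) = 1` and `y = x`.
-/

namespace IsMinimalNormalSubgroup

variable {H : Type*} [Group H] [Group.IsSolvable H] {A : Subgroup H}

theorem commutator_eq_bot (hA : IsMinimalNormalSubgroup A) : ⁅A, A⁆ = ⊥ := by
  have := hA.1
  by_contra hne
  exact (Group.IsSolvable.commutator_lt_of_ne_bot hA.2.1).ne
    (hA.2.2 _ inferInstance hne (Subgroup.commutator_le_left A A))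

theorem le_centralizer (hA : IsMinimalNormalSubgroup A) : A ≤ Subgroup.centralizer A :=
  Subgroup.commutator_eq_bot_iff_le_centralizer.mp hA.commutator_eq_bot

end IsMinimalNormalSubgroup

namespace MulAction

variable {G X : Type*} [Group G] [MulAction G X]

theorem eq_bot_of_normal_le_stabilizer [FaithfulSMul G X] [IsPretransitive G X]
    {N : Subgroup G} [N.Normal] {x : X} (hN : N ≤ stabilizer G x) : N = ⊥ := by
  refine (Subgroup.eq_bot_iff_forall N).mpr fun n hn => eq_of_smul_eq_smul (α := X) fun y => ?_
  obtain ⟨g, rfl⟩ := exists_smul_eq G x y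
  have hconj : (g⁻¹ * n * g) • x = x :=
    hN (by simpa using Subgroup.Normal.conj_mem ‹_› n hn g⁻¹)
  calc n • g • x = g • (g⁻¹ * n * g) • x := by
        simp only [smul_smul, mul_assoc, mul_inv_cancel_left]
    _ = (1 : G) • g • x := by rw [hconj, one_smul]

theorem isPretransitive_of_isCoatom_stabilizer [IsPretransitive G X] {x : X}
    (hx : IsCoatom (stabilizer G x)) {N : Subgroup G} [N.Normal] (hN : ¬N ≤ stabilizer G x) :
    IsPretransitive N X := by
  rw [isPretransitive_iff_base x]
  intro y
  obtain ⟨g, rfl⟩ := exists_smul_eq G x y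
  have hg : g ∈ N ⊔ stabilizer G x := by
    rw [hx.2 _ (right_lt_sup.mpr hN)]
    trivial
  obtain ⟨n, hn, s, hs, rfl⟩ := Subgroup.mem_sup_of_normal_left.mp hg
  exact ⟨⟨n, hn⟩, by rw [mul_smul, mem_stabilizer_iff.mp hs]; rfl⟩

theorem smul_eq_self_of_mem_centralizer {N : Subgroup G} [IsPretransitive N X] {a : G}
    (ha : a ∈ Subgroup.centralizer N) {x : X} (hax : a • x = x) (y : X) : a • y = y := by
  obtain ⟨n, rfl⟩ := exists_smul_eq N x y
  rw [Subgroup.smul_def, smul_smul, ← Subgroup.mem_centralizer_iff.mp ha n n.2, mul_smul, hax]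

theorem mul_comm_of_smul_eq [FaithfulSMul G X] {A : Subgroup G} [A.Normal] [IsPretransitive A X]
    (hA : A ≤ Subgroup.centralizer A) {x : X} {a b : G} (ha : a ∈ A) (hbx : b • x = x)
    (hb : b • a • x = a • x) : a * b = b * a := by
  have hcA : a⁻¹ * b * a * b⁻¹ ∈ A := by
    simpa only [mul_assoc] using mul_mem (inv_mem ha) (Subgroup.Normal.conj_mem ‹_› a ha b)
  have hcx : (a⁻¹ * b * a * b⁻¹) • x = x := by
    rw [mul_smul, inv_smul_eq_iff.mpr hbx.symm, mul_smul, mul_smul, hb, inv_smul_smul]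
  have hc : a⁻¹ * b * a * b⁻¹ = 1 :=
    eq_of_smul_eq_smul fun y => by rw [one_smul, smul_eq_self_of_mem_centralizer (hA hcA) hcx]
  have hab : a * (a⁻¹ * b * a * b⁻¹) * b = b * a := by group
  rwa [hc, mul_one] at hab

end MulAction

theorem unique_fixed_point_of_trivial_centralizer_general {Ω : Type*} [Fintype Ω]
    (G : Subgroup (Equiv.Perm Ω))
    (hprim : IsPrimitivePermSubgroup G) (hsolv : IsSolvable G)
    (A : Subgroup G) (hA : IsMinimalNormalSubgroup A)
    (x : Ω) (B : Subgroup G)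
    (hBS : B ≤ MulAction.stabilizer G x)
    (hcent : ∀ a ∈ A, (∀ b ∈ B, a * b = b * a) → a = 1) :
    {y : Ω | ∀ b ∈ B, b • y = y} = {x} := by
  obtain ⟨hG, hcoatom⟩ := hprim
  have : Group.IsSolvable G := hsolv
  have := hA.1
  have hAx : ¬A ≤ MulAction.stabilizer G x :=
    fun h => hA.2.1 (MulAction.eq_bot_of_normal_le_stabilizer h)
  have := MulAction.isPretransitive_of_isCoatom_stabilizer (hcoatom x) hAx
  refine Set.eq_singleton_iff_unique_mem.mpr ⟨fun b hb => hBS hb, fun y hy => ?_⟩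
  obtain ⟨a, rfl⟩ := MulAction.exists_smul_eq A x y
  have ha : (a : G) = 1 := hcent a a.2 fun b hb =>
    MulAction.mul_comm_of_smul_eq hA.le_centralizer a.2 (hBS hb) (hy b hb)
  rw [Subgroup.smul_def, ha, one_smul]

/-- Let G be primitive solvable in Sym(Ω) with unique minimal normal subgroup A, x ∈ Ω,
and B a minimal normal subgroup of the stabilizer G_x. If the centralizer of B in A is
trivial, then x is the only fixed point of the action of B on Ω. -/
theorem unique_fixed_point_of_trivial_centralizer {Ω : Type*} [Fintype Ω] [Nonempty Ω]
    (G : Subgroup (Equiv.Perm Ω))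
    (hprim : IsPrimitivePermSubgroup G) (hsolv : IsSolvable G)
    (A : Subgroup G) (hA : IsMinimalNormalSubgroup A)
    (x : Ω) (B : Subgroup G)
    (hBS : B ≤ MulAction.stabilizer G x)
    (hBnormal : ∀ g ∈ MulAction.stabilizer G x, ∀ b ∈ B, g * b * g⁻¹ ∈ B)
    (hBne : B ≠ ⊥)
    (hBmin : ∀ B' : Subgroup G, B' ≤ B →
      (∀ g ∈ MulAction.stabilizer G x, ∀ b ∈ B', g * b * g⁻¹ ∈ B') → B' ≠ ⊥ → B' = B)
    (hcent : ∀ a ∈ A, (∀ b ∈ B, a * b = b * a) → a = 1) :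
    {y : Ω | ∀ b ∈ B, b • y = y} = {x} :=
  unique_fixed_point_of_trivial_centralizer_general G hprim hsolv A hA x B hBS hcent
end

section
/- Let π : X → Y be a degree d primitive covering of smooth projective complex curves whose Galois group G (the monodromy group acting on the generic fiber) is solvable. Then there is a prime p with d = p^k, and every branch point y of π satisfies b(y) ≥ (p^k − p^{k-1})/2. -/
open scoped Pointwise


/-- The branching multiplicity of a monodromy element: Σ over nontrivial cycles of
(cycle length − 1); this is the multiplicity b(y) of the corresponding branch point. -/
def branchMult {Ω : Type*} [Fintype Ω] [DecidableEq Ω] (g : Equiv.Perm Ω) : ℕ :=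
  ∑ c ∈ g.cycleFactorsFinset, (c.support.card - 1)

/-- Combinatorial data of a branched covering of curves: the generic fiber Ω, the
monodromy (Galois) group G acting on Ω, and for each branch point y a nontrivial
local monodromy element of G given by a small loop around y. -/
structure CoverData (Ω : Type*) [Fintype Ω] where
  G : Subgroup (Equiv.Perm Ω)
  BranchPts : Type*
  mono : BranchPts → Equiv.Perm Ω
  mono_mem : ∀ y, mono y ∈ G
  mono_ne : ∀ y, mono y ≠ 1

section Aux

/-- Subgroup equality from inclusion and a cardinality bound. -/
theorem aux_sub_eq_of_le_of_card_le {H : Type*} [Group H] [Finite H] {A B : Subgroup H}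
    (h : B ≤ A) (hc : Nat.card A ≤ Nat.card B) : B = A := by
  have hB : Nat.card B = (B : Set H).ncard := Nat.card_coe_set_eq _
  have hA : Nat.card A = (A : Set H).ncard := Nat.card_coe_set_eq _
  have := Set.eq_of_subset_of_ncard_le (t := (A : Set H)) (s := (B : Set H)) h
    (by rw [← hA, ← hB]; exact hc) (Set.toFinite _)
  exact SetLike.coe_injective this

/-- A nontrivial finite group has a minimal normal subgroup. -/
theorem aux_exists_minimal_normal {H : Type*} [Group H] [Finite H] [Nontrivial H] :
    ∃ A : Subgroup H, IsMinimalNormalSubgroup A := by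
  have hex : ∃ n, ∃ B : Subgroup H, B.Normal ∧ B ≠ ⊥ ∧ Nat.card B = n :=
    ⟨Nat.card (⊤ : Subgroup H), ⊤, inferInstance, top_ne_bot, rfl⟩
  classical
  obtain ⟨A, hAnorm, hAne, hAcard⟩ := Nat.find_spec hex
  refine ⟨A, hAnorm, hAne, fun B hBnorm hBne hBle => ?_⟩
  have : Nat.find hex ≤ Nat.card B := Nat.find_min' hex ⟨B, hBnorm, hBne, rfl⟩
  exact aux_sub_eq_of_le_of_card_le hBle (hAcard ▸ this)

/-- A minimal normal subgroup of a solvable group is abelian. -/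
theorem aux_minimal_normal_comm {H : Type*} [Group H] {A : Subgroup H}
    (hA : IsMinimalNormalSubgroup A) (hsolv : IsSolvable H) :
    ∀ a ∈ A, ∀ b ∈ A, a * b = b * a := by
  obtain ⟨hnorm, hne, hmin⟩ := hA
  haveI := hnorm
  by_cases hC : ⁅A, A⁆ = ⊥
  · intro a ha b hb
    open scoped commutatorElement in
    have : ⁅a, b⁆ ∈ ⁅A, A⁆ := Subgroup.commutator_mem_commutator ha hb
    rw [hC, Subgroup.mem_bot] at this
    exact commutatorElement_eq_one_iff_mul_comm.mp this
  · exfalso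
    have hCA : ⁅A, A⁆ = A := hmin _ inferInstance hC (Subgroup.commutator_le_right A A)
    have key : ∀ n, A ≤ derivedSeries H n := by
      intro n
      induction n with
      | zero => exact le_top
      | succ n ih =>
        rw [derivedSeries_succ]
        calc A = ⁅A, A⁆ := hCA.symm
        _ ≤ _ := Subgroup.commutator_mono ih ih
    obtain ⟨n, hn⟩ := (isSolvable_def H).mp hsolv
    exact hne (le_bot_iff.mp (hn ▸ key n))

/-- An abelian minimal normal subgroup of a finite group has prime power order. -/
theorem aux_minimal_normal_pow_card {H : Type*} [Group H] [Finite H] {A : Subgroup H}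
    (hA : IsMinimalNormalSubgroup A) (hcomm : ∀ a ∈ A, ∀ b ∈ A, a * b = b * a) :
    ∃ p k : ℕ, p.Prime ∧ 1 ≤ k ∧ Nat.card A = p ^ k := by
  classical
  obtain ⟨hnorm, hne, hmin⟩ := hA
  have h2 : 1 < Nat.card A := (Subgroup.one_lt_card_iff_ne_bot A).mpr hne
  set p := (Nat.card A).minFac with hp
  have hpp : p.Prime := Nat.minFac_prime (by omega)
  haveI : Fact p.Prime := ⟨hpp⟩
  haveI : Fintype ↥A := Fintype.ofFinite _
  obtain ⟨g, hg⟩ := exists_prime_orderOf_dvd_card (G := ↥A) p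
    (by rw [← Nat.card_eq_fintype_card]; exact Nat.minFac_dvd _)
  let B : Subgroup H :=
    { carrier := {h | h ∈ A ∧ h ^ p = 1}
      one_mem' := ⟨A.one_mem, one_pow p⟩
      mul_mem' := by
        rintro a b ⟨ha, hap⟩ ⟨hb, hbp⟩
        exact ⟨A.mul_mem ha hb, by
          rw [Commute.mul_pow ((hcomm a ha b hb) : Commute a b), hap, hbp, one_mul]⟩
      inv_mem' := by
        rintro a ⟨ha, hap⟩
        exact ⟨A.inv_mem ha, by rw [inv_pow, hap, inv_one]⟩ }
  have hBnorm : B.Normal := by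
    constructor
    rintro a ⟨ha, hap⟩ h
    refine ⟨hnorm.conj_mem a ha h, ?_⟩
    have hcj : (h * a * h⁻¹) ^ p = h * a ^ p * h⁻¹ := by
      simpa [MulAut.conj_apply] using (map_pow (MulAut.conj h) a p).symm
    rw [hcj, hap, mul_one, mul_inv_cancel]
  have hBne : B ≠ ⊥ := by
    rw [Subgroup.ne_bot_iff_exists_ne_one]
    refine ⟨⟨(g : H), (g : ↥A).2, ?_⟩, ?_⟩
    · have : (g : ↥A) ^ p = 1 := by rw [← hg]; exact pow_orderOf_eq_one g
      exact_mod_cast congrArg (Subtype.val) this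
    · intro hcon
      have : (g : H) = 1 := congrArg Subtype.val hcon
      have hgne : g ≠ 1 := by
        intro h1; rw [h1, orderOf_one] at hg; exact hpp.one_lt.ne' hg.symm
      exact hgne (by ext; exact this)
  have hBA : B = A := hmin B hBnorm hBne (fun a ha => ha.1)
  have hPA : IsPGroup p ↥A := by
    intro a
    refine ⟨1, ?_⟩
    have hmem : (a : H) ∈ B := hBA.symm ▸ a.2
    have := hmem.2
    rw [pow_one]
    ext
    simpa using this
  obtain ⟨k, hk⟩ := IsPGroup.iff_card.mp hPA
  refine ⟨p, k, hpp, ?_, hk⟩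
  by_contra h
  simp only [not_le, Nat.lt_one_iff] at h
  rw [h, pow_zero] at hk
  omega

/-- The support of a permutation has card at most twice its branch multiplicity. -/
theorem aux_support_card_le_two_mul_branchMult {Ω : Type*} [Fintype Ω] [DecidableEq Ω]
    (σ : Equiv.Perm Ω) : σ.support.card ≤ 2 * branchMult σ := by
  classical
  have hdisj := Equiv.Perm.cycleFactorsFinset_pairwise_disjoint σ
  have h1 : σ.support = σ.cycleFactorsFinset.biUnion (fun c => c.support) := by
    conv_lhs => rw [← Equiv.Perm.cycleFactorsFinset_noncommProd σ]
    exact Equiv.Perm.support_noncommProd hdisj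
  have h2 : σ.support.card = ∑ c ∈ σ.cycleFactorsFinset, c.support.card := by
    rw [h1]
    exact Finset.card_biUnion (fun c hc d hd hcd => (hdisj hc hd hcd).disjoint_support)
  rw [h2, branchMult, Finset.mul_sum]
  apply Finset.sum_le_sum
  intro c hc
  have h2le : 2 ≤ c.support.card :=
    (Equiv.Perm.mem_cycleFactorsFinset_iff.mp hc).1.two_le_card_support
  omega

end Aux

/-- (Zariski) For a degree d primitive covering of curves with solvable monodromy
group, d = p^k for a prime p and every branch point y satisfies
b(y) ≥ (p^k − p^(k-1))/2. -/
theorem primitive_solvable_branch_bound {Ω : Type*} [Fintype Ω] [DecidableEq Ω]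
    [Nonempty Ω] (D : CoverData Ω)
    (hprim : IsPrimitivePermSubgroup D.G) (hsolv : IsSolvable D.G) :
    ∃ p k : ℕ, p.Prime ∧ 1 ≤ k ∧ Fintype.card Ω = p ^ k ∧
      ∀ y : D.BranchPts, p ^ k - p ^ (k - 1) ≤ 2 * branchMult (D.mono y) := by
  classical
  obtain ⟨htrans, hstab⟩ := hprim
  obtain ⟨x₀⟩ := ‹Nonempty Ω›
  set G := D.G with hGdef
  -- faithfulness
  have hsmul : ∀ (g : ↥G) (z : Ω), g • z = (g : Equiv.Perm Ω) z := fun g z => rfl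
  have hfaith : ∀ g : ↥G, (∀ z : Ω, g • z = z) → g = 1 := by
    intro g h
    apply Subtype.ext
    apply Equiv.ext
    intro z
    simpa [hsmul] using h z
  -- G is nontrivial
  haveI : Nontrivial ↥G := by
    have hSne : MulAction.stabilizer G x₀ ≠ ⊤ := (hstab x₀).1
    have : ∃ g : ↥G, g ∉ MulAction.stabilizer G x₀ := by
      by_contra h
      push_neg at h
      exact hSne (eq_top_iff.mpr fun g _ => h g)
    obtain ⟨g, hg⟩ := this
    exact ⟨g, 1, fun h => hg (h ▸ (MulAction.stabilizer G x₀).one_mem)⟩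
  -- minimal normal subgroup
  obtain ⟨A, hAmin⟩ := aux_exists_minimal_normal (H := ↥G)
  obtain ⟨hAnorm, hAne, hAminimal⟩ := hAmin
  haveI := hAnorm
  have hcomm := aux_minimal_normal_comm ⟨hAnorm, hAne, hAminimal⟩ hsolv
  obtain ⟨p, k, hpp, hk1, hAcard⟩ :=
    aux_minimal_normal_pow_card ⟨hAnorm, hAne, hAminimal⟩ hcomm
  -- A is not contained in the stabilizer
  have hAstab : ¬ A ≤ MulAction.stabilizer G x₀ := by
    intro hle
    apply hAne
    rw [eq_bot_iff]
    intro a ha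
    rw [Subgroup.mem_bot]
    apply hfaith
    intro z
    obtain ⟨g, hg⟩ := MulAction.exists_smul_eq (M := ↥G) x₀ z
    have h1 : g⁻¹ * a * g ∈ A := by
      have := hAnorm.conj_mem a ha g⁻¹
      simpa [mul_assoc] using this
    have h2 : (g⁻¹ * a * g) • x₀ = x₀ := hle h1
    calc a • z = a • (g • x₀) := by rw [hg]
      _ = (g * (g⁻¹ * a * g)) • x₀ := by
          rw [← mul_smul]; congr 1; group
      _ = g • ((g⁻¹ * a * g) • x₀) := by rw [mul_smul]
      _ = g • x₀ := by rw [h2]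
      _ = z := hg
  -- A ⊔ stabilizer = ⊤ by maximality
  have hsup : A ⊔ MulAction.stabilizer G x₀ = ⊤ := by
    apply (hstab x₀).2
    refine lt_of_le_of_ne le_sup_right ?_
    intro h
    exact hAstab (h ▸ le_sup_left)
  -- A acts transitively
  have hAtrans : ∀ z : Ω, ∃ a : ↥G, a ∈ A ∧ a • x₀ = z := by
    intro z
    obtain ⟨g, hg⟩ := MulAction.exists_smul_eq (M := ↥G) x₀ z
    have hgmem : (g : ↥G) ∈ A ⊔ MulAction.stabilizer G x₀ := hsup ▸ Subgroup.mem_top g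
    have hgmem' : (g : ↥G) ∈ (A : Set ↥G) * (MulAction.stabilizer G x₀ : Set ↥G) := by
      rw [← Subgroup.normal_mul]; exact_mod_cast hgmem
    obtain ⟨a, ha, s, hs, rfl⟩ := hgmem'
    refine ⟨a, ha, ?_⟩
    rw [← hg, mul_smul]
    congr 1
    exact (MulAction.mem_stabilizer_iff.mp hs).symm
  -- A acts freely
  have hfreex₀ : ∀ c : ↥G, c ∈ A → c • x₀ = x₀ → c = 1 := by
    intro c hc hcx
    apply hfaith
    intro w
    obtain ⟨d, hd, hdx⟩ := hAtrans w
    rw [← hdx, ← mul_smul, hcomm c hc d hd, mul_smul, hcx]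
  have hAfree : ∀ a : ↥G, a ∈ A → ∀ z : Ω, a • z = z → a = 1 := by
    intro a ha z hz
    obtain ⟨b, hb, hbx⟩ := hAtrans z
    have h1 : b⁻¹ * a * b ∈ A := A.mul_mem (A.mul_mem (A.inv_mem hb) ha) hb
    have h2 : (b⁻¹ * a * b) • x₀ = x₀ := by
      rw [mul_smul, mul_smul, hbx, hz, ← hbx, inv_smul_smul]
    have h3 := hfreex₀ _ h1 h2
    have : a = b * (b⁻¹ * a * b) * b⁻¹ := by group
    rw [this, h3, mul_one, mul_inv_cancel]
  have hAtrans2 : ∀ w z : Ω, ∃ a : ↥G, a ∈ A ∧ a • w = z := by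
    intro w z
    obtain ⟨a, ha, haw⟩ := hAtrans w
    obtain ⟨b, hb, hbz⟩ := hAtrans z
    exact ⟨b * a⁻¹, A.mul_mem hb (A.inv_mem ha),
      by rw [mul_smul, ← haw, inv_smul_smul, hbz]⟩
  -- the orbit map is a bijection from A to Ω
  have hbij : Function.Bijective (fun a : ↥A => ((a : ↥G) • x₀ : Ω)) := by
    constructor
    · intro a b hab
      simp only at hab
      have hmem : (b : ↥G)⁻¹ * (a : ↥G) ∈ A := A.mul_mem (A.inv_mem b.2) a.2
      have hfix : ((b : ↥G)⁻¹ * (a : ↥G)) • x₀ = x₀ := by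
        rw [mul_smul, hab, inv_smul_smul]
      have h1 := hAfree _ hmem x₀ hfix
      have h2 : (a : ↥G) = (b : ↥G) := by
        have := congrArg (fun x => (b : ↥G) * x) h1
        simpa [mul_assoc] using this
      exact Subtype.ext h2
    · intro z
      obtain ⟨a, ha, hax⟩ := hAtrans z
      exact ⟨⟨a, ha⟩, hax⟩
  have hcardΩ : Fintype.card Ω = p ^ k := by
    rw [← Nat.card_eq_fintype_card, ← Nat.card_eq_of_bijective _ hbij, hAcard]
  refine ⟨p, k, hpp, hk1, hcardΩ, ?_⟩
  intro y
  set σ := D.mono y with hσdef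
  set g : ↥G := ⟨σ, D.mono_mem y⟩ with hgdef
  have hgne : g ≠ 1 := fun h => D.mono_ne y (congrArg Subtype.val h)
  have hgsmul : ∀ z : Ω, g • z = σ z := fun z => rfl
  -- the fixed-point set
  set F : Finset Ω := Finset.univ.filter (fun z => σ z = z) with hFdef
  have hsuppF : σ.support.card + F.card = Fintype.card Ω := by
    rw [hFdef]
    have h1 : σ.support = Finset.univ.filter (fun z => ¬ σ z = z) := by
      ext z; simp [Equiv.Perm.mem_support]
    rw [h1, add_comm]
    exact Finset.card_filter_add_card_filter_not _
  -- fixed point bound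
  have hFle : F.card ≤ p ^ (k - 1) := by
    rcases Finset.eq_empty_or_nonempty F with hF | ⟨z₀, hz₀⟩
    · simp [hF]
    · have hz₀fix : σ z₀ = z₀ := by
        rw [hFdef] at hz₀; simpa using hz₀
      set C := A ⊓ Subgroup.centralizer {g} with hCdef
      -- a surjection from C onto F
      have hmapsto : ∀ c : ↥G, c ∈ C → (c • z₀ : Ω) ∈ F := by
        intro c hc
        have hcomm' : g * c = c * g :=
          (Subgroup.mem_centralizer_iff.mp hc.2) g (Set.mem_singleton g)
        rw [hFdef, Finset.mem_filter]
        refine ⟨Finset.mem_univ _, ?_⟩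
        have : g • (c • z₀) = c • z₀ := by
          rw [← mul_smul, hcomm', mul_smul, hgsmul z₀, hz₀fix]
        rw [← hgsmul]; exact this
      have hsurj : Function.Surjective
          (fun c : ↥C => (⟨(c : ↥G) • z₀, hmapsto _ c.2⟩ : {z : Ω // z ∈ F})) := by
        rintro ⟨z, hz⟩
        have hzfix : σ z = z := by rw [hFdef] at hz; simpa using hz
        obtain ⟨c, hb', hbz'⟩ := hAtrans2 z₀ z
        -- g c g⁻¹ = c by freeness
        have hgcg : g * c * g⁻¹ ∈ A := by
          have := hAnorm.conj_mem c hb' g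
          simpa using this
        have hfix2 : ((g * c * g⁻¹) • z₀ : Ω) = c • z₀ := by
          have hgz₀ : g⁻¹ • z₀ = z₀ := by
            rw [inv_smul_eq_iff, hgsmul, hz₀fix]
          rw [mul_smul, mul_smul, hgz₀, hbz', hgsmul, hzfix]
        have hone : c⁻¹ * (g * c * g⁻¹) ∈ A := A.mul_mem (A.inv_mem hb') hgcg
        have hone2 : (c⁻¹ * (g * c * g⁻¹)) • z₀ = z₀ := by
          rw [mul_smul, hfix2, inv_smul_smul]
        have h3 := hAfree _ hone z₀ hone2
        have hcommc : g * c = c * g := by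
          have : g * c * g⁻¹ = c := by
            have := congrArg (fun x => c * x) h3
            simpa [mul_assoc] using this
          have := congrArg (fun x => x * g) this
          simpa [mul_assoc] using this
        have hcmem : c ∈ C := by
          rw [hCdef]
          refine ⟨hb', Subgroup.mem_centralizer_iff.mpr ?_⟩
          rintro h (rfl : h = g)
          exact hcommc
        exact ⟨⟨c, hcmem⟩, Subtype.ext hbz'⟩
      have hcardle : F.card ≤ Nat.card ↥C := by
        have h1 : Nat.card {z : Ω // z ∈ F} ≤ Nat.card ↥C :=
          Nat.card_le_card_of_surjective _ hsurj
        rwa [Nat.card_eq_fintype_card, Fintype.card_coe] at h1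
      -- C is a proper subgroup of A
      have hCA : C ≠ A := by
        intro h
        apply hgne
        apply hfaith
        intro z
        obtain ⟨a, ha, haz⟩ := hAtrans2 z₀ z
        have haC : a ∈ C := h.symm ▸ ha
        have hcomm' : g * a = a * g :=
          (Subgroup.mem_centralizer_iff.mp haC.2) g (Set.mem_singleton g)
        have hgz₀' : g • z₀ = z₀ := by rw [hgsmul, hz₀fix]
        rw [← haz, ← mul_smul, hcomm', mul_smul, hgz₀']
      have hdvd : Nat.card ↥C ∣ p ^ k := by
        rw [← hAcard]
        exact Subgroup.card_dvd_of_le inf_le_left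
      obtain ⟨j, hj, hCcard⟩ := (Nat.dvd_prime_pow hpp).mp hdvd
      have hjk : j ≠ k := by
        intro h
        apply hCA
        apply aux_sub_eq_of_le_of_card_le inf_le_left
        rw [hCcard, h, hAcard]
      have : p ^ j ≤ p ^ (k - 1) :=
        Nat.pow_le_pow_right hpp.one_lt.le (by omega)
      omega
  have h2b : σ.support.card ≤ 2 * branchMult σ := aux_support_card_le_two_mul_branchMult σ
  have hk' : p ^ (k - 1) ≤ p ^ k := Nat.pow_le_pow_right hpp.one_lt.le (by omega)
  rw [hcardΩ] at hsuppF
  omega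
end

section
/- Let π : X → Y be a degree d = 2^k primitive covering of smooth projective complex curves with solvable monodromy group, and suppose 2^k − 1 is prime. Then every branch point y of π satisfies b(y) ≥ 2^{k-1} − 1. -/
open MulAction Subgroup Pointwise
open scoped commutatorElement

private lemma exists_min_subgroup {G : Type*} [Group G] [Finite G]
    (S : Set (Subgroup G)) (hS : S.Nonempty) : ∃ m ∈ S, ∀ b ∈ S, ¬ b < m := by
  have := Finite.to_wellFoundedLT (α := Subgroup G)
  obtain ⟨m, hm, hmin⟩ := this.wf.has_min S hS
  exact ⟨m, hm, fun b hb hlt => hmin b hb hlt⟩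

private lemma derived_ne {G : Type*} [Group G] [Group.IsSolvable G] (K : Subgroup G) (hK : K ≠ ⊥) :
    ⁅K, K⁆ ≠ K := by
  intro h
  have key : ∀ n, (derivedSeries ↥K n).map K.subtype = K := by
    intro n
    induction n with
    | zero =>
      rw [derivedSeries_zero, ← MonoidHom.range_eq_map, Subgroup.range_subtype]
    | succ n ih =>
      rw [derivedSeries_succ, Subgroup.map_commutator, ih, h]
  obtain ⟨n, hn⟩ := (inferInstance : Group.IsSolvable ↥K).solvable
  have := key n
  rw [hn] at this
  simp at this
  exact hK this.symm

private lemma centralizer_card_modEq {G : Type*} [Group G] [Finite G] (V B : Subgroup G)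
    [hVn : V.Normal] {q : ℕ} (hq : Nat.Prime q) (hB : IsPGroup q ↥B) :
    Nat.card ↥(V ⊓ Subgroup.centralizer ↑B) ≡ Nat.card ↥V [MOD q] := by
  haveI := Fact.mk hq
  letI : MulAction ↥B ↥V := MulAction.compHom _ ((MulAut.conjNormal (H := V)).comp B.subtype)
  have hsmul : ∀ (b : ↥B) (v : ↥V), ((b • v : ↥V) : G) = ↑b * ↑v * (↑b)⁻¹ := by
    intro b v
    rfl
  have key := hB.card_modEq_card_fixedPoints ↥V
  have fwd_mem : ∀ c : ↥(V ⊓ Subgroup.centralizer ↑B),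
      (⟨(c : G), c.2.1⟩ : ↥V) ∈ fixedPoints ↥B ↥V := by
    intro c b
    have hcomm : (b : G) * c = c * b :=
      (Subgroup.mem_centralizer_iff.mp c.2.2) (b : G) b.2
    apply Subtype.ext
    rw [hsmul, mul_inv_eq_iff_eq_mul]
    exact hcomm
  have inv_mem : ∀ v : ↑(fixedPoints ↥B ↥V), ((v : ↥V) : G) ∈ V ⊓ Subgroup.centralizer ↑B := by
    intro v
    refine Subgroup.mem_inf.mpr ⟨(v : ↥V).2, Subgroup.mem_centralizer_iff.mpr ?_⟩
    intro b hb
    have h1 := v.2 ⟨b, hb⟩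
    have h2 := congrArg (fun u : ↥V => (u : G)) h1
    simp only [hsmul] at h2
    rw [mul_inv_eq_iff_eq_mul] at h2
    exact h2
  have hcardeq : Nat.card ↥(V ⊓ Subgroup.centralizer ↑B) =
      Nat.card ↑(fixedPoints ↥B ↥V) := by
    apply Nat.card_congr
    exact ⟨fun c => ⟨⟨(c : G), c.2.1⟩, fwd_mem c⟩, fun v => ⟨(v : ↥V), inv_mem v⟩,
      fun c => rfl, fun v => rfl⟩
  rw [hcardeq]
  exact key.symm

private theorem core_fix {G : Type*} [Group G] {Ω : Type*} [Fintype Ω]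
    [MulAction G Ω] (k : ℕ)
    (hfaith : ∀ g : G, (∀ u : Ω, g • u = u) → g = 1)
    (htrans : ∀ u u' : Ω, ∃ g : G, g • u = u')
    (hcoatom : ∀ u : Ω, IsCoatom (stabilizer G u))
    (hsolv : IsSolvable G)
    (hcard : Fintype.card Ω = 2 ^ k) (hp : Nat.Prime (2 ^ k - 1))
    {g : G} (hg : g ≠ 1) {x y z : Ω} (hx : g • x = x) (hy : g • y = y) (hz : g • z = z)
    (hxy : x ≠ y) (hxz : x ≠ z) (hyz : y ≠ z) : False := by
  classical
  haveI : Group.IsSolvable G := hsolv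
  -- G is finite
  haveI hfinG : Finite G := by
    apply Finite.of_injective (fun (a : G) (u : Ω) => a • u)
    intro a b hab
    have h1 : ∀ u : Ω, (b⁻¹ * a) • u = u := by
      intro u
      have h2 : a • u = b • u := congrFun hab u
      rw [mul_smul, h2, inv_smul_smul]
    exact (inv_mul_eq_one.mp (hfaith _ h1)).symm
  have hk2 : 2 ≤ k := by
    by_contra hk
    push_neg at hk
    interval_cases k <;> norm_num at hp
  set p := 2 ^ k - 1 with hpdef
  have h2k1 : 1 ≤ 2 ^ k := Nat.one_le_two_pow
  have hppos : 2 ^ k = p + 1 := by omega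
  have hp3 : 3 ≤ p := by
    have h4 : (4 : ℕ) ≤ 2 ^ k := by
      calc (4 : ℕ) = 2 ^ 2 := by norm_num
      _ ≤ 2 ^ k := Nat.pow_le_pow_right (by norm_num) hk2
    omega
  -- nontrivial G
  obtain ⟨g₀, hg₀x⟩ := htrans x y
  have hg₀ : g₀ ≠ 1 := by
    intro h
    rw [h, one_smul] at hg₀x
    exact hxy hg₀x
  haveI : Nontrivial G := ⟨g₀, 1, hg₀⟩
  -- minimal normal subgroup V
  obtain ⟨V, ⟨hVnorm, hVbot⟩, hVmin'⟩ :=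
    exists_min_subgroup {B : Subgroup G | B.Normal ∧ B ≠ ⊥}
      ⟨⊤, ⟨inferInstance, fun h => hg₀ (Subgroup.mem_bot.mp (h ▸ Subgroup.mem_top g₀))⟩⟩
  haveI := hVnorm
  have hVmin : ∀ B : Subgroup G, B.Normal → B ≠ ⊥ → B ≤ V → B = V := by
    intro B hBn hBb hBle
    by_contra hne
    exact hVmin' B ⟨hBn, hBb⟩ (lt_of_le_of_ne hBle hne)
  -- V abelian
  have hVcomm : ∀ v ∈ V, ∀ w ∈ V, v * w = w * v := by
    have hle : ⁅V, V⁆ ≤ V := by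
      rw [Subgroup.commutator_le]
      intro a ha b hb
      rw [commutatorElement_def]
      exact V.mul_mem (V.mul_mem (V.mul_mem ha hb) (V.inv_mem ha)) (V.inv_mem hb)
    have hbot : ⁅V, V⁆ = ⊥ := by
      by_contra hne
      exact derived_ne V hVbot
        (hVmin _ (Subgroup.commutator_normal V V) hne hle)
    intro v hv w hw
    have h1 : ⁅v, w⁆ ∈ (⊥ : Subgroup G) := hbot ▸ Subgroup.commutator_mem_commutator hv hw
    rw [Subgroup.mem_bot] at h1
    exact commutatorElement_eq_one_iff_mul_comm.mp h1
  -- stabilizer of x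
  set H := stabilizer G x with hHdef
  have hcoH : IsCoatom H := hcoatom x
  have hgH : g ∈ H := mem_stabilizer_iff.mpr hx
  -- transitivity of V
  have hVtrans' : ∀ u : Ω, ∃ v ∈ V, v • x = u := by
    have hsup : V ⊔ H = H ∨ V ⊔ H = ⊤ := by
      rcases eq_or_lt_of_le (le_sup_right : H ≤ V ⊔ H) with h | h
      · exact Or.inl h.symm
      · exact Or.inr (hcoH.2 _ h)
    rcases hsup with h | h
    · exfalso
      have hVH : V ≤ H := le_trans le_sup_left h.le
      apply hVbot
      rw [Subgroup.eq_bot_iff_forall]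
      intro v hv
      apply hfaith
      intro u
      obtain ⟨g₁, hg₁⟩ := htrans x u
      have hmem : g₁⁻¹ * v * g₁ ∈ V := by
        have := hVnorm.conj_mem v hv g₁⁻¹
        simpa using this
      have hfix : (g₁⁻¹ * v * g₁) • x = x := mem_stabilizer_iff.mp (hVH hmem)
      calc v • u = v • (g₁ • x) := by rw [hg₁]
        _ = (v * g₁) • x := by rw [mul_smul]
        _ = (g₁ * (g₁⁻¹ * v * g₁)) • x := by
              rw [show v * g₁ = g₁ * (g₁⁻¹ * v * g₁) by group]
        _ = g₁ • ((g₁⁻¹ * v * g₁) • x) := by rw [mul_smul]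
        _ = g₁ • x := by rw [hfix]
        _ = u := hg₁
    · intro u
      obtain ⟨g₁, hg₁⟩ := htrans x u
      have hmem : g₁ ∈ (V : Set G) * (H : Set G) := by
        rw [← Subgroup.normal_mul V H]
        exact h ▸ Subgroup.mem_top g₁
      obtain ⟨v, hv, s, hs, rfl⟩ := hmem
      refine ⟨v, hv, ?_⟩
      rw [mul_smul, mem_stabilizer_iff.mp hs] at hg₁
      exact hg₁
  have hVtrans : ∀ u u' : Ω, ∃ v ∈ V, v • u = u' := by
    intro u u'
    obtain ⟨g₁, hg₁⟩ := htrans x u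
    obtain ⟨w, hw, hwx⟩ := hVtrans' (g₁⁻¹ • u')
    refine ⟨g₁ * w * g₁⁻¹, hVnorm.conj_mem w hw g₁, ?_⟩
    rw [← hg₁]
    calc (g₁ * w * g₁⁻¹) • (g₁ • x) = ((g₁ * w * g₁⁻¹) * g₁) • x := by rw [← mul_smul]
      _ = (g₁ * w) • x := by rw [show g₁ * w * g₁⁻¹ * g₁ = g₁ * w by group]
      _ = g₁ • (w • x) := by rw [mul_smul]
      _ = g₁ • (g₁⁻¹ • u') := by rw [hwx]
      _ = u' := smul_inv_smul g₁ u'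
  have hVfree : ∀ v ∈ V, ∀ u : Ω, v • u = u → v = 1 := by
    intro v hv u hu
    apply hfaith
    intro u'
    obtain ⟨w, hw, hwu⟩ := hVtrans u u'
    calc v • u' = v • (w • u) := by rw [hwu]
      _ = (v * w) • u := by rw [mul_smul]
      _ = (w * v) • u := by rw [hVcomm v hv w hw]
      _ = w • (v • u) := by rw [mul_smul]
      _ = w • u := by rw [hu]
      _ = u' := hwu
  -- card V = 2^k
  have hVcard : Nat.card ↥V = 2 ^ k := by
    have hbij : Function.Bijective (fun v : ↥V => (v : G) • x) := by
      constructor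
      · intro a b hab
        have h1 : ((b : G)⁻¹ * a) • x = x := by
          rw [mul_smul]
          simp only at hab
          rw [hab, inv_smul_smul]
        have h2 := hVfree _ (V.mul_mem (V.inv_mem b.2) a.2) x h1
        exact Subtype.ext (inv_mul_eq_one.mp h2).symm
      · intro u
        obtain ⟨v, hv, hvx⟩ := hVtrans' u
        exact ⟨⟨v, hv⟩, hvx⟩
    rw [Nat.card_eq_of_bijective _ hbij, Nat.card_eq_fintype_card, hcard]
  -- elements of H centralizing V are trivial
  have hHV : ∀ h' ∈ H, (∀ v ∈ V, h' * v = v * h') → h' = 1 := by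
    intro h' hh' hcomm
    apply hfaith
    intro u
    obtain ⟨v, hv, hvx⟩ := hVtrans' u
    have hfix : h' • x = x := mem_stabilizer_iff.mp hh'
    calc h' • u = h' • (v • x) := by rw [hvx]
      _ = (h' * v) • x := by rw [mul_smul]
      _ = (v * h') • x := by rw [hcomm v hv]
      _ = v • (h' • x) := by rw [mul_smul]
      _ = v • x := by rw [hfix]
      _ = u := hvx
  -- H is nontrivial
  have hHbot : H ≠ ⊥ := by
    intro hHb
    have hall : ∀ B : Subgroup G, B = ⊥ ∨ B = ⊤ := by
      intro B
      rcases eq_or_ne B ⊥ with h | h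
      · exact Or.inl h
      · exact Or.inr (hcoH.2 B (hHb ▸ bot_lt_iff_ne_bot.mpr h))
    have hcardG : Nat.card G = 2 ^ k := by
      have hbij : Function.Bijective (fun a : G => a • x) := by
        constructor
        · intro a b hab
          have h1 : (b⁻¹ * a) • x = x := by
            rw [mul_smul]
            simp only at hab
            rw [hab, inv_smul_smul]
          have h2 : b⁻¹ * a ∈ H := mem_stabilizer_iff.mpr h1
          rw [hHb, Subgroup.mem_bot] at h2
          exact (inv_mul_eq_one.mp h2).symm
        · exact htrans x
      rw [Nat.card_eq_of_bijective _ hbij, Nat.card_eq_fintype_card, hcard]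
    have h1 : Subgroup.zpowers g₀ = ⊤ := by
      rcases hall (Subgroup.zpowers g₀) with h | h
      · exact absurd (Subgroup.mem_bot.mp (h ▸ Subgroup.mem_zpowers g₀)) hg₀
      · exact h
    have hord : orderOf g₀ = 2 ^ k := by
      rw [← Nat.card_zpowers, h1, Subgroup.card_top, hcardG]
    have hord2 : orderOf (g₀ ^ 2) = 2 ^ (k - 1) := by
      rw [orderOf_pow, hord]
      have hgcd : Nat.gcd (2 ^ k) 2 = 2 := by
        apply Nat.gcd_eq_right
        exact dvd_pow_self 2 (by omega)
      rw [hgcd]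
      have : 2 ^ k = 2 ^ (k - 1) * 2 := by
        rw [← pow_succ]
        congr 1
        omega
      omega
    have hne1 : (1 : ℕ) < 2 ^ (k - 1) := by
      have : (2 : ℕ) ^ 1 ≤ 2 ^ (k - 1) := Nat.pow_le_pow_right (by norm_num) (by omega)
      omega
    rcases hall (Subgroup.zpowers (g₀ ^ 2)) with h | h
    · have := Nat.card_zpowers (g₀ ^ 2)
      rw [h, Subgroup.card_bot, hord2] at this
      omega
    · have := Nat.card_zpowers (g₀ ^ 2)
      rw [h, Subgroup.card_top, hcardG, hord2] at this
      have h2 : 2 ^ (k - 1) < 2 ^ k := Nat.pow_lt_pow_right (by norm_num) (by omega)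
      omega
  -- irreducibility of V under H
  have hirr : ∀ W : Subgroup G, W ≤ V → (∀ h' ∈ H, ∀ w ∈ W, h' * w * h'⁻¹ ∈ W) →
      W ≠ ⊥ → W = V := by
    intro W hWV hWconj hWbot
    have hsup : W ⊔ H = H ∨ W ⊔ H = ⊤ := by
      rcases eq_or_lt_of_le (le_sup_right : H ≤ W ⊔ H) with h | h
      · exact Or.inl h.symm
      · exact Or.inr (hcoH.2 _ h)
    rcases hsup with h | h
    · exfalso
      have hWH : W ≤ H := le_trans le_sup_left h.le
      apply hWbot
      rw [Subgroup.eq_bot_iff_forall]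
      intro w hw
      exact hVfree w (hWV hw) x (mem_stabilizer_iff.mp (hWH hw))
    · have hnorm : Subgroup.normalizer (W : Set G) = ⊤ := by
        rw [eq_top_iff, ← h]
        apply sup_le
        · exact Subgroup.le_normalizer
        · intro h' hh'
          rw [Subgroup.mem_normalizer_iff]
          intro w
          constructor
          · exact fun hww => hWconj h' hh' w hww
          · intro hww
            have h2 := hWconj h'⁻¹ (H.inv_mem hh') _ hww
            have h3 : h'⁻¹ * (h' * w * h'⁻¹) * h'⁻¹⁻¹ = w := by group
            rwa [h3] at h2
      exact hVmin W (Subgroup.normalizer_eq_top_iff.mp hnorm) hWbot hWV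
  -- minimal H-invariant subgroup A of H
  obtain ⟨A, ⟨hAH, hAbot, hAconj⟩, hAmin'⟩ :=
    exists_min_subgroup
      {B : Subgroup G | B ≤ H ∧ B ≠ ⊥ ∧ ∀ h' ∈ H, ∀ b ∈ B, h' * b * h'⁻¹ ∈ B}
      ⟨H, le_refl H, hHbot, fun h' hh' b hb => H.mul_mem (H.mul_mem hh' hb) (H.inv_mem hh')⟩
  have hAmin : ∀ B : Subgroup G, B ≤ A → B ≠ ⊥ →
      (∀ h' ∈ H, ∀ b ∈ B, h' * b * h'⁻¹ ∈ B) → B = A := by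
    intro B hBA hBbot hBconj
    by_contra hne
    exact hAmin' B ⟨le_trans hBA hAH, hBbot, hBconj⟩ (lt_of_le_of_ne hBA hne)
  -- A abelian
  have hAcomm : ∀ a ∈ A, ∀ b ∈ A, a * b = b * a := by
    have hle : ⁅A, A⁆ ≤ A := by
      rw [Subgroup.commutator_le]
      intro a ha b hb
      rw [commutatorElement_def]
      exact A.mul_mem (A.mul_mem (A.mul_mem ha hb) (A.inv_mem ha)) (A.inv_mem hb)
    have hconjcomm : ∀ h' ∈ H, ∀ c ∈ ⁅A, A⁆, h' * c * h'⁻¹ ∈ ⁅A, A⁆ := by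
      intro h' hh' c hc
      have hmap : Subgroup.map (MulAut.conj h').toMonoidHom A = A := by
        apply le_antisymm
        · rintro _ ⟨a, ha, rfl⟩
          exact hAconj h' hh' a ha
        · intro a ha
          refine ⟨h'⁻¹ * a * h', ?_, ?_⟩
          · have h2 := hAconj h'⁻¹ (H.inv_mem hh') a ha
            rwa [inv_inv] at h2
          · show h' * (h'⁻¹ * a * h') * h'⁻¹ = a
            group
      have h1 : (MulAut.conj h').toMonoidHom c ∈
          Subgroup.map (MulAut.conj h').toMonoidHom ⁅A, A⁆ := ⟨c, hc, rfl⟩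
      rw [Subgroup.map_commutator, hmap] at h1
      simpa [MulAut.conj_apply] using h1
    have hbot : ⁅A, A⁆ = ⊥ := by
      by_contra hne
      exact derived_ne A hAbot (hAmin _ hle hne hconjcomm)
    intro a ha b hb
    have h1 : ⁅a, b⁆ ∈ (⊥ : Subgroup G) := hbot ▸ Subgroup.commutator_mem_commutator ha hb
    rw [Subgroup.mem_bot] at h1
    exact commutatorElement_eq_one_iff_mul_comm.mp h1
  -- A has prime exponent q
  have hcardA1 : Nat.card ↥A ≠ 1 := fun h => hAbot ((Subgroup.eq_bot_iff_card A).mpr h)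
  set q := (Nat.card ↥A).minFac with hqdef
  have hq : Nat.Prime q := Nat.minFac_prime hcardA1
  haveI := Fact.mk hq
  have hAq : ∀ a ∈ A, a ^ q = 1 := by
    set T : Subgroup G :=
      { carrier := {t | t ∈ A ∧ t ^ q = 1}
        one_mem' := ⟨A.one_mem, one_pow q⟩
        mul_mem' := by
          rintro a b ⟨haA, haq⟩ ⟨hbA, hbq⟩
          exact ⟨A.mul_mem haA hbA, by
            rw [Commute.mul_pow (hAcomm a haA b hbA), haq, hbq, one_mul]⟩
        inv_mem' := by
          rintro a ⟨haA, haq⟩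
          exact ⟨A.inv_mem haA, by rw [inv_pow, haq, inv_one]⟩ } with hTdef
    have hTle : T ≤ A := fun t ht => ht.1
    have hTconj : ∀ h' ∈ H, ∀ t ∈ T, h' * t * h'⁻¹ ∈ T := by
      rintro h' hh' t ⟨htA, htq⟩
      refine ⟨hAconj h' hh' t htA, ?_⟩
      have h1 : (h' * t * h'⁻¹) ^ q = h' * t ^ q * h'⁻¹ := by
        rw [← MulAut.conj_apply, ← map_pow, MulAut.conj_apply]
      rw [h1, htq, mul_one, mul_inv_cancel]
    have hTbot : T ≠ ⊥ := by
      letI := Fintype.ofFinite ↥A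
      obtain ⟨a, ha⟩ := exists_prime_orderOf_dvd_card (G := ↥A) q
        (by rw [← Nat.card_eq_fintype_card]; exact Nat.minFac_dvd _)
      intro hTb
      have haq : (a : G) ^ q = 1 := by
        have h1 : a ^ q = 1 := by rw [← ha]; exact pow_orderOf_eq_one a
        have := congrArg (fun t : ↥A => (t : G)) h1
        simpa using this
      have haT : (a : G) ∈ T := ⟨a.2, haq⟩
      rw [hTb, Subgroup.mem_bot] at haT
      have ha1 : a = 1 := Subtype.ext haT
      rw [ha1, orderOf_one] at ha
      have := hq.two_le
      omega
    have hTA : T = A := hAmin T hTle hTbot hTconj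
    intro a ha
    rw [← hTA] at ha
    exact ha.2
  have hApgroup : IsPGroup q ↥A := by
    intro a
    refine ⟨1, ?_⟩
    rw [pow_one]
    apply Subtype.ext
    have : ((a : G)) ^ q = 1 := hAq _ a.2
    simpa using this
  -- C_V(A) = ⊥
  have hCA : V ⊓ Subgroup.centralizer ↑A = ⊥ := by
    by_contra hne
    have heq : V ⊓ Subgroup.centralizer ↑A = V := by
      apply hirr _ inf_le_left ?_ hne
      intro h' hh' w hw
      obtain ⟨hwV, hwC⟩ := Subgroup.mem_inf.mp hw
      refine Subgroup.mem_inf.mpr ⟨hVnorm.conj_mem _ hwV h', Subgroup.mem_centralizer_iff.mpr ?_⟩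
      intro b hbA
      have hb' : h'⁻¹ * b * h' ∈ A := by
        have := hAconj h'⁻¹ (H.inv_mem hh') b hbA
        simpa using this
      have hcw : (h'⁻¹ * b * h') * w = w * (h'⁻¹ * b * h') :=
        Subgroup.mem_centralizer_iff.mp hwC _ hb'
      calc b * (h' * w * h'⁻¹) = h' * ((h'⁻¹ * b * h') * w) * h'⁻¹ := by group
        _ = h' * (w * (h'⁻¹ * b * h')) * h'⁻¹ := by rw [hcw]
        _ = (h' * w * h'⁻¹) * b := by group
    have hVcent : V ≤ Subgroup.centralizer ↑A := heq.symm.le.trans inf_le_right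
    apply hAbot
    rw [Subgroup.eq_bot_iff_forall]
    intro a haA
    apply hHV a (hAH haA)
    intro v hv
    exact Subgroup.mem_centralizer_iff.mp (hVcent hv) a haA
  -- q = p
  have hqp : q = p := by
    have hmod := centralizer_card_modEq V A hq hApgroup
    rw [hCA, Subgroup.card_bot, hVcard] at hmod
    have hdvd : q ∣ 2 ^ k - 1 := (Nat.modEq_iff_dvd' h2k1).mp hmod
    exact (Nat.prime_dvd_prime_iff_eq hq hp).mp hdvd
  have hordA : ∀ b ∈ A, b ≠ 1 → orderOf b = p := by
    intro b hbA hb1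
    have hdvd : orderOf b ∣ q := orderOf_dvd_of_pow_eq_one (hAq b hbA)
    rcases (Nat.Prime.eq_one_or_self_of_dvd hq _ hdvd) with h | h
    · exact absurd (orderOf_eq_one_iff.mp h) hb1
    · rw [h, hqp]
  -- fixed-point-freeness of nontrivial elements of A on V \ {1}
  have hfpf : ∀ b ∈ A, b ≠ 1 → ∀ v ∈ V, b * v = v * b → v = 1 := by
    intro b hbA hb1 v hvV hcomm
    have hordb : orderOf b = p := hordA b hbA hb1
    have hpgb : IsPGroup p ↥(Subgroup.zpowers b) :=
      IsPGroup.of_card (n := 1) (by rw [Nat.card_zpowers, hordb, pow_one])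
    have hmod := centralizer_card_modEq V (Subgroup.zpowers b) hp hpgb
    obtain ⟨m, hmk, hm⟩ := (Nat.dvd_prime_pow Nat.prime_two).mp
      (hVcard ▸ Subgroup.card_dvd_of_le
        (inf_le_left : V ⊓ Subgroup.centralizer ↑(Subgroup.zpowers b) ≤ V))
    rw [hm, hVcard] at hmod
    have hle2 : 2 ^ m ≤ 2 ^ k := Nat.pow_le_pow_right (by norm_num) hmk
    have hdvd : p ∣ 2 ^ k - 2 ^ m := (Nat.modEq_iff_dvd' hle2).mp hmod
    have hsplit : 2 ^ k - 2 ^ m = 2 ^ m * (2 ^ (k - m) - 1) := by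
      rw [Nat.mul_sub, mul_one, ← pow_add]
      congr 2
      omega
    rw [hsplit] at hdvd
    have hdvd' : p ∣ 2 ^ (k - m) - 1 := by
      rcases (Nat.Prime.dvd_mul hp).mp hdvd with h | h
      · exfalso
        have h2 : p ∣ 2 := Nat.Prime.dvd_of_dvd_pow hp h
        have := Nat.le_of_dvd (by norm_num) h2
        omega
      · exact h
    have h1km : 1 ≤ 2 ^ (k - m) := Nat.one_le_two_pow
    have hlekm : 2 ^ (k - m) ≤ 2 ^ k := Nat.pow_le_pow_right (by norm_num) (by omega)
    rcases Nat.eq_zero_or_pos (2 ^ (k - m) - 1) with h0 | hpos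
    · -- m = k : b centralizes V, contradiction
      have hkm : 2 ^ (k - m) = 1 := by omega
      have hkm0 : k - m = 0 := by
        by_contra hne
        have := Nat.one_lt_two_pow_iff.mpr hne
        omega
      have hmk' : m = k := by omega
      have hCV : V ⊓ Subgroup.centralizer ↑(Subgroup.zpowers b) = V :=
        Subgroup.eq_of_le_of_card_ge inf_le_left (by rw [hm, hVcard, hmk'])
      exfalso
      apply hb1
      apply hHV b (hAH hbA)
      intro v' hv'
      have hv'C : v' ∈ V ⊓ Subgroup.centralizer ↑(Subgroup.zpowers b) := by
        rw [hCV]; exact hv'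
      exact Subgroup.mem_centralizer_iff.mp (Subgroup.mem_inf.mp hv'C).2 b
        (Subgroup.mem_zpowers b)
    · -- m = 0 : centralizer is trivial, so v = 1
      have hgep : p ≤ 2 ^ (k - m) - 1 := Nat.le_of_dvd hpos hdvd'
      have hkm : 2 ^ (k - m) = 2 ^ k := by omega
      have hm0 : m = 0 := by
        have := Nat.pow_right_injective (le_refl 2) hkm
        omega
      have hCbot : V ⊓ Subgroup.centralizer ↑(Subgroup.zpowers b) = ⊥ :=
        (Subgroup.eq_bot_iff_card _).mpr (by rw [hm, hm0, pow_zero])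
      have hvC : v ∈ V ⊓ Subgroup.centralizer ↑(Subgroup.zpowers b) := by
        refine Subgroup.mem_inf.mpr ⟨hvV, Subgroup.mem_centralizer_iff.mpr ?_⟩
        intro s hs
        obtain ⟨n, rfl⟩ := Subgroup.mem_zpowers_iff.mp hs
        exact (Commute.zpow_left (hcomm : Commute b v) n)
      rw [hCbot, Subgroup.mem_bot] at hvC
      exact hvC
  -- conjugation injectivity
  have hconjinj : ∀ v₀ : G, v₀ ∈ V → v₀ ≠ 1 → ∀ a b : ↥A,
      (a : G) * v₀ * (a : G)⁻¹ = (b : G) * v₀ * (b : G)⁻¹ → a = b := by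
    intro v₀ hv₀V hv₀1 a b h1
    have hcomm : ((b : G)⁻¹ * a) * v₀ = v₀ * ((b : G)⁻¹ * a) := by
      calc ((b : G)⁻¹ * a) * v₀ = (b : G)⁻¹ * ((a : G) * v₀ * (a : G)⁻¹) * a := by group
        _ = (b : G)⁻¹ * ((b : G) * v₀ * (b : G)⁻¹) * a := by rw [h1]
        _ = v₀ * ((b : G)⁻¹ * a) := by group
    by_contra hne
    have hne' : (b : G)⁻¹ * a ≠ 1 := by
      intro h
      exact hne (Subtype.ext (inv_mul_eq_one.mp h)).symm
    exact hv₀1 (hfpf _ (A.mul_mem (A.inv_mem b.2) a.2) hne' v₀ hv₀V hcomm)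
  -- card A = p
  obtain ⟨v₀, hv₀V, hv₀1⟩ : ∃ v₀ ∈ V, v₀ ≠ 1 := by
    by_contra hall
    push_neg at hall
    exact hVbot ((Subgroup.eq_bot_iff_forall V).mpr hall)
  have hAle : Nat.card ↥A ≤ 2 ^ k := by
    have hinj : Function.Injective
        (fun a : ↥A => (⟨(a : G) * v₀ * (a : G)⁻¹, hVnorm.conj_mem _ hv₀V _⟩ : ↥V)) := by
      intro a b hab
      exact hconjinj v₀ hv₀V hv₀1 a b (congrArg (fun t : ↥V => (t : G)) hab)
    exact hVcard ▸ Nat.card_le_card_of_injective _ hinj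
  have hAcard : Nat.card ↥A = p := by
    haveI := Fact.mk hp
    obtain ⟨n, hn⟩ := (IsPGroup.iff_card (p := p)).mp (hqp ▸ hApgroup)
    have hn0 : n ≠ 0 := by
      intro h
      rw [h, pow_zero] at hn
      exact hcardA1 hn
    have hn1 : n = 1 := by
      by_contra hne
      have hn2 : 2 ≤ n := by omega
      have h1 : p ^ 2 ≤ p ^ n := Nat.pow_le_pow_right (by omega) hn2
      have h2 : p * p ≤ p + 1 := by
        have := hAle
        rw [hn] at this
        calc p * p = p ^ 2 := (sq p).symm
          _ ≤ p ^ n := h1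
          _ ≤ 2 ^ k := this
          _ = p + 1 := hppos
      nlinarith
    rw [hn, hn1, pow_one]
  -- transitivity of A on V \ {1}
  have hAtrans : ∀ v ∈ V, v ≠ 1 → ∀ w ∈ V, w ≠ 1 → ∃ b ∈ A, b * v * b⁻¹ = w := by
    intro v hvV hv1 w hwV hw1
    letI := Fintype.ofFinite ↥V
    letI := Fintype.ofFinite ↥A
    set ψ : ↥A → {u : ↥V // ¬ (u = 1)} := fun a =>
      ⟨⟨(a : G) * v * (a : G)⁻¹, hVnorm.conj_mem _ hvV _⟩, by
        intro hu
        apply hv1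
        have h1 := congrArg (fun t : ↥V => (t : G)) hu
        simp only at h1
        have h2 : (a : G) * v * (a : G)⁻¹ = 1 := h1
        calc v = (a : G)⁻¹ * ((a : G) * v * (a : G)⁻¹) * a := by group
          _ = (a : G)⁻¹ * 1 * a := by rw [h2]
          _ = 1 := by group⟩ with hψdef
    have hinjψ : Function.Injective ψ := by
      intro a b hab
      have h1 := congrArg (fun t : {u : ↥V // ¬ (u = 1)} => ((t : ↥V) : G)) hab
      exact hconjinj v hvV hv1 a b h1
    have hcards : Fintype.card ↥A = Fintype.card {u : ↥V // ¬ (u = 1)} := by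
      have hsub : Fintype.card {u : ↥V // ¬ (u = 1)} =
          Fintype.card ↥V - Fintype.card {u : ↥V // u = 1} :=
        Fintype.card_subtype_compl _
      rw [← Nat.card_eq_fintype_card, hAcard, hsub, Fintype.card_subtype_eq (1 : ↥V),
        ← Nat.card_eq_fintype_card, hVcard]
    have hbij := (Fintype.bijective_iff_injective_and_card ψ).mpr ⟨hinjψ, hcards⟩
    obtain ⟨b, hb⟩ := hbij.2 ⟨⟨w, hwV⟩, by
      intro h
      exact hw1 (congrArg (fun t : ↥V => (t : G)) h)⟩
    refine ⟨b, b.2, ?_⟩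
    exact congrArg (fun t : {u : ↥V // ¬ (u = 1)} => ((t : ↥V) : G)) hb
  -- set up the three fixed points
  obtain ⟨v, hvV, hvx⟩ := hVtrans' y
  obtain ⟨w, hwV, hwx⟩ := hVtrans' z
  have hv1 : v ≠ 1 := by
    intro h
    rw [h, one_smul] at hvx
    exact hxy hvx
  have hw1 : w ≠ 1 := by
    intro h
    rw [h, one_smul] at hwx
    exact hxz hwx
  have hvw : v ≠ w := by
    intro h
    apply hyz
    rw [← hvx, ← hwx, h]
  have hginvx : g⁻¹ • x = x := by
    conv_lhs => rw [← hx]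
    rw [inv_smul_smul]
  -- g fixes v and w under conjugation
  have hconjfix : ∀ v' ∈ V, ∀ u' : Ω, v' • x = u' → g • u' = u' → g * v' * g⁻¹ = v' := by
    intro v' hv' u' hv'x hgu'
    have hmem : g * v' * g⁻¹ ∈ V := hVnorm.conj_mem v' hv' g
    have hact : (g * v' * g⁻¹) • x = u' := by
      calc (g * v' * g⁻¹) • x = g • (v' • (g⁻¹ • x)) := by rw [mul_smul, mul_smul]
        _ = g • (v' • x) := by rw [hginvx]
        _ = g • u' := by rw [hv'x]
        _ = u' := hgu'
    have h1 : (v'⁻¹ * (g * v' * g⁻¹)) • x = x := by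
      rw [mul_smul, hact, ← hv'x, inv_smul_smul]
    have h2 := hVfree _ (V.mul_mem (V.inv_mem hv') hmem) x h1
    exact (inv_mul_eq_one.mp h2).symm
  have hgv : g * v * g⁻¹ = v := hconjfix v hvV y hvx hy
  have hgw : g * w * g⁻¹ = w := hconjfix w hwV z hwx hz
  have hgv' : g⁻¹ * v * g = v := by
    calc g⁻¹ * v * g = g⁻¹ * (g * v * g⁻¹) * g := by rw [hgv]
      _ = v := by group
  -- Galois argument
  obtain ⟨b, hbA, hbvw⟩ := hAtrans v hvV hv1 w hwV hw1
  have hb1 : b ≠ 1 := by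
    intro h
    apply hvw
    rw [h] at hbvw
    simpa using hbvw
  have hcvw : (g * b * g⁻¹) * v * (g * b * g⁻¹)⁻¹ = w := by
    calc (g * b * g⁻¹) * v * (g * b * g⁻¹)⁻¹
        = g * (b * (g⁻¹ * v * g) * b⁻¹) * g⁻¹ := by group
      _ = g * (b * v * b⁻¹) * g⁻¹ := by rw [hgv']
      _ = g * w * g⁻¹ := by rw [hbvw]
      _ = w := hgw
  have hcA : g * b * g⁻¹ ∈ A := hAconj g hgH b hbA
  have hcommv : (b⁻¹ * (g * b * g⁻¹)) * v = v * (b⁻¹ * (g * b * g⁻¹)) := by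
    have h1 : (g * b * g⁻¹) * v * (g * b * g⁻¹)⁻¹ = b * v * b⁻¹ := by rw [hcvw, hbvw]
    calc (b⁻¹ * (g * b * g⁻¹)) * v
        = b⁻¹ * ((g * b * g⁻¹) * v * (g * b * g⁻¹)⁻¹) * (g * b * g⁻¹) := by group
      _ = b⁻¹ * (b * v * b⁻¹) * (g * b * g⁻¹) := by rw [h1]
      _ = v * (b⁻¹ * (g * b * g⁻¹)) := by group
  have hbeq : b = g * b * g⁻¹ := by
    by_contra hne
    have hne' : b⁻¹ * (g * b * g⁻¹) ≠ 1 := by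
      intro h
      exact hne (inv_mul_eq_one.mp h)
    exact hv1 (hfpf _ (A.mul_mem (A.inv_mem hbA) hcA) hne' v hvV hcommv)
  have hgb : g * b = b * g := by
    calc g * b = (g * b * g⁻¹) * g := by group
      _ = b * g := by rw [← hbeq]
  -- A = zpowers b
  have hAz : Subgroup.zpowers b = A := by
    apply Subgroup.eq_of_le_of_card_ge (Subgroup.zpowers_le.mpr hbA)
    rw [hAcard, Nat.card_zpowers, hordA b hbA hb1]
  -- g centralizes A, hence V, hence trivial: contradiction
  have hgA : ∀ c ∈ A, g * c = c * g := by
    intro c hc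
    rw [← hAz] at hc
    obtain ⟨n, rfl⟩ := Subgroup.mem_zpowers_iff.mp hc
    exact Commute.zpow_right (hgb : Commute g b) n
  have hgVcomm : ∀ v' ∈ V, g * v' = v' * g := by
    intro v' hv'
    rcases eq_or_ne v' 1 with rfl | hne
    · simp
    obtain ⟨c, hcA2, hcv⟩ := hAtrans v hvV hv1 v' hv' hne
    have hgc : g * c = c * g := hgA c hcA2
    have hfix2 : g * v' * g⁻¹ = v' := by
      rw [← hcv]
      calc g * (c * v * c⁻¹) * g⁻¹ = (g * c) * v * (g * c)⁻¹ := by group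
        _ = (c * g) * v * (c * g)⁻¹ := by rw [hgc]
        _ = c * (g * v * g⁻¹) * c⁻¹ := by group
        _ = c * v * c⁻¹ := by rw [hgv]
    calc g * v' = (g * v' * g⁻¹) * g := by group
      _ = v' * g := by rw [hfix2]
  exact hg (hHV g hgH hgVcomm)

/-- For a degree 2^k primitive covering of curves with solvable monodromy group,
if 2^k − 1 is a Mersenne prime then every branch point y satisfies
b(y) ≥ 2^(k-1) − 1. -/
theorem mersenne_branch_bound {Ω : Type*} [Fintype Ω] [DecidableEq Ω]
    [Nonempty Ω] (k : ℕ) (D : CoverData Ω)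
    (hcard : Fintype.card Ω = 2 ^ k) (hmersenne : Nat.Prime (2 ^ k - 1))
    (hprim : IsPrimitivePermSubgroup D.G) (hsolv : IsSolvable D.G) :
    ∀ y : D.BranchPts, 2 ^ (k - 1) - 1 ≤ branchMult (D.mono y) := by
  intro y
  obtain ⟨htr, hco⟩ := hprim
  haveI := htr
  set σ := D.mono y with hσdef
  have hmem : σ ∈ D.G := D.mono_mem y
  have hσne : σ ≠ 1 := D.mono_ne y
  have hfaith : ∀ g : ↥D.G, (∀ u : Ω, g • u = u) → g = 1 := by
    intro g hgu
    have h1 : (g : Equiv.Perm Ω) = 1 := by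
      ext u
      exact hgu u
    exact Subtype.ext h1
  have htrans : ∀ u u' : Ω, ∃ g : ↥D.G, g • u = u' := fun u u' =>
    MulAction.exists_smul_eq (↥D.G) u u'
  have hfix2 : σ.supportᶜ.card ≤ 2 := by
    by_contra hgt
    push_neg at hgt
    obtain ⟨a, b, c, ha, hb, hc, hab, hac, hbc⟩ := Finset.two_lt_card_iff.mp hgt
    rw [Finset.mem_compl, Equiv.Perm.notMem_support] at ha hb hc
    exact core_fix k hfaith htrans hco hsolv hcard hmersenne
      (g := ⟨σ, hmem⟩) (fun h => hσne (congrArg Subtype.val h))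
      (x := a) (y := b) (z := c) ha hb hc hab hac hbc
  have hsupp : 2 ^ k - 2 ≤ σ.support.card := by
    have h1 := Finset.card_compl (σ.support)
    have h2 : σ.support.card ≤ Fintype.card Ω := Finset.card_le_univ _
    rw [hcard] at h1 h2
    omega
  have hsum : ∑ c ∈ σ.cycleFactorsFinset, c.support.card = σ.support.card := by
    rw [← Equiv.Perm.sum_cycleType, Equiv.Perm.cycleType_def]
    rfl
  have h2le : ∀ c ∈ σ.cycleFactorsFinset, 2 ≤ c.support.card := fun c hc =>
    (Equiv.Perm.mem_cycleFactorsFinset_iff.mp hc).1.two_le_card_support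
  have hbm : 2 ^ k - 2 ≤ 2 * branchMult σ := by
    have h3 : ∑ c ∈ σ.cycleFactorsFinset, c.support.card ≤
        ∑ c ∈ σ.cycleFactorsFinset, 2 * (c.support.card - 1) := by
      apply Finset.sum_le_sum
      intro c hc
      have := h2le c hc
      omega
    calc 2 ^ k - 2 ≤ σ.support.card := hsupp
      _ = ∑ c ∈ σ.cycleFactorsFinset, c.support.card := hsum.symm
      _ ≤ ∑ c ∈ σ.cycleFactorsFinset, 2 * (c.support.card - 1) := h3
      _ = 2 * branchMult σ := by unfold branchMult; rw [Finset.mul_sum]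
  have hpow : 2 ^ k = 2 * 2 ^ (k - 1) := by
    have hk2 : 2 ≤ k := by
      by_contra hk
      push_neg at hk
      interval_cases k <;> norm_num at hmersenne
    rw [← pow_succ']
    congr 1
    omega
  have h1 : 1 ≤ 2 ^ (k - 1) := Nat.one_le_two_pow
  omega
end
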